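/- In the two-agent, two-identical-goods instance with entitlements w₁ < 1/2 and w₂ = 1 − w₁, any lottery over deterministic allocations that is ex-ante weighted envy-free must assign positive probability to the allocation in which agent 2 receives both goods. -/

import Mathlib

/-!
Agents 1 and 2 are the indices `0` and `1` of `Fin 2`.
Let `t` be the expected number of goods agent 1 receives, so agent 2 expects `2 - t`.
Agent 2 not envying agent 1 reads `t / w₁ ≤ (2 - t) / (1 - w₁)`, i.e. `t ≤ 2 w₁ < 1`.
If the allocation giving both goods to agent 2 had probability zero, every allocation in the
support would give agent 1 at least one good, forcing `t ≥ 1`.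
-/

open Finset

/-- Bundle of agent `i` under deterministic allocation `A` (good ↦ agent). -/
def bundle (A : Fin 2 → Fin 2) (i : Fin 2) : Finset (Fin 2) :=
  Finset.univ.filter (fun g => A g = i)

/-- Fractional allocation induced by a lottery `p`: probability that good `g` goes to agent `i`. -/
def fracAlloc (p : (Fin 2 → Fin 2) → ℝ) (i g : Fin 2) : ℝ :=
  ∑ A ∈ Finset.univ.filter (fun A : Fin 2 → Fin 2 => A g = i), p A

/-- Ex-ante weighted envy-freeness of a lottery. -/
def ExAnteWEF (p : (Fin 2 → Fin 2) → ℝ) (w : Fin 2 → ℝ) (v : Fin 2 → Fin 2 → ℝ) : Prop :=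
  ∀ i j : Fin 2,
    (∑ g, fracAlloc p j g * v i g) / w j ≤ (∑ g, fracAlloc p i g * v i g) / w i

lemma sum_fracAlloc_eq_sum_mul_card (p : (Fin 2 → Fin 2) → ℝ) (i : Fin 2) :
    ∑ g, fracAlloc p i g = ∑ A, p A * (bundle A i).card := by
  simp only [fracAlloc, bundle, sum_filter]
  rw [sum_comm]
  refine sum_congr rfl fun A _ => ?_
  rw [← sum_filter, sum_const, nsmul_eq_mul, mul_comm]

lemma sum_fracAlloc_agents (p : (Fin 2 → Fin 2) → ℝ) (g : Fin 2) :
    ∑ i, fracAlloc p i g = ∑ A, p A :=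
  sum_fiberwise univ (fun A : Fin 2 → Fin 2 => A g) p

lemma bundle_zero_nonempty {A : Fin 2 → Fin 2} (hA : A ≠ fun _ => 1) :
    (bundle A 0).Nonempty := by
  obtain ⟨g, hg⟩ := Function.ne_iff.mp hA
  exact ⟨g, mem_filter.mpr ⟨mem_univ g, by omega⟩⟩

lemma one_le_sum_fracAlloc_zero {p : (Fin 2 → Fin 2) → ℝ} (hp0 : ∀ A, 0 ≤ p A)
    (hp1 : ∑ A, p A = 1) (hpA : p (fun _ => 1) = 0) :
    1 ≤ ∑ g, fracAlloc p 0 g := by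
  rw [sum_fracAlloc_eq_sum_mul_card, ← hp1]
  refine sum_le_sum fun A _ => ?_
  by_cases hA : A = fun _ => 1
  · simp [hA, hpA]
  · have hcard : (1 : ℝ) ≤ (bundle A 0).card := by
      exact_mod_cast (bundle_zero_nonempty hA).card_pos
    exact le_mul_of_one_le_right (hp0 A) hcard

lemma ExAnteWEF.sum_fracAlloc_zero_le {w1 : ℝ} (hw1l : 0 < w1) (hw1r : w1 < 1)
    {w : Fin 2 → ℝ} (hw : w = ![w1, 1 - w1]) {v : Fin 2 → Fin 2 → ℝ} (hv : ∀ i g, v i g = 1)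
    {p : (Fin 2 → Fin 2) → ℝ} (hp1 : ∑ A, p A = 1) (hWEF : ExAnteWEF p w v) :
    ∑ g, fracAlloc p 0 g ≤ 2 * w1 := by
  have hagents (g : Fin 2) := sum_fracAlloc_agents p g
  have hW := hWEF 1 0
  simp only [hv, mul_one, hw, Matrix.cons_val_zero, Matrix.cons_val_one] at hW
  simp only [Fin.sum_univ_two, hp1] at hagents hW ⊢
  rw [div_le_div_iff₀ hw1l (by linarith)] at hW
  nlinarith [hagents 0, hagents 1]

/-- With two identical goods and w₁ < 1/2, any ex-ante WEF lottery gives positive probability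
to the allocation in which agent 2 (index 1) receives both goods. -/
theorem stmt1 (w1 : ℝ) (hw1l : 0 < w1) (hw1r : w1 < 1 / 2)
    (w : Fin 2 → ℝ) (hw : w = ![w1, 1 - w1])
    (v : Fin 2 → Fin 2 → ℝ) (hv : ∀ i g, v i g = 1)
    (p : (Fin 2 → Fin 2) → ℝ) (hp0 : ∀ A, 0 ≤ p A) (hp1 : ∑ A, p A = 1)
    (hWEF : ExAnteWEF p w v) :
    0 < p (fun _ => 1) := by
  have hle := hWEF.sum_fracAlloc_zero_le hw1l (by linarith) hw hv hp1
  refine (hp0 _).lt_of_ne fun hpA => ?_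
  have hge := one_le_sum_fracAlloc_zero hp0 hp1 hpA.symm
  linarith
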